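/- arXiv:2202.08567 — 6 statements merged into one kernel-verified Lean document; each statement's English description precedes it below -/
import Mathlib

section
/- Let X be a smooth real Banach space and let C₁, C₂ ⊆ X be closed convex sets. Let x₁ ∈ C₁, x₂ ∈ C₂ with x₁ ≠ x₂, and let w⋆ be the unique element of the normalized duality mapping at x₂ − x₁. If x₁ is a nearest point in C₁ to x₂ and x₂ is a nearest point in C₂ to x₁, then ‖x₁ − x₂‖ = dist(C₁, C₂). -/
/-!
Write `u = x₂ - x₁`. The right derivative of `t ↦ ‖u + t • w‖` at `0` is a sublinear function of
the direction `w`, so by Hahn–Banach some norming functional of `u` takes the value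
`‖u‖ * (that derivative)` at `w`; since the duality map at `u` is `{w⋆}`, this functional is `w⋆`.
The nearest-point conditions make the derivative nonnegative in the directions `x₁ - a`
(`a ∈ C₁`) and `b - x₂` (`b ∈ C₂`), which gives `‖u‖² = w⋆ u ≤ w⋆ (b - a) ≤ ‖u‖ ‖b - a‖`.
-/

/-- The normalized duality mapping `M(x) = {x* : x*(x) = ‖x‖² = ‖x*‖²}`. -/
def dualityMap {X : Type*} [NormedAddCommGroup X] [NormedSpace ℝ X] (x : X) :
    Set (X →L[ℝ] ℝ) :=
  {f : X →L[ℝ] ℝ | f x = ‖x‖ ^ 2 ∧ ‖x‖ ^ 2 = ‖f‖ ^ 2}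

/-- Distance between two sets: `dist(A,B) = inf {‖a − b‖ : a ∈ A, b ∈ B}`. -/
noncomputable def setDist {X : Type*} [NormedAddCommGroup X] (A B : Set X) : ℝ :=
  sInf (Set.image2 (fun a b => ‖a - b‖) A B)

open Set Filter Topology

theorem rightDeriv_le_of_eventually_le {f g : ℝ → ℝ} {f' g' x : ℝ}
    (hf : HasDerivWithinAt f f' (Ioi x) x) (hg : HasDerivWithinAt g g' (Ioi x) x)
    (hfg₀ : f x = g x) (hfg : ∀ᶠ y in 𝓝[>] x, f y ≤ g y) : f' ≤ g' := by
  rw [hasDerivWithinAt_iff_tendsto_slope' self_notMem_Ioi] at hf hg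
  refine le_of_tendsto_of_tendsto hf hg ?_
  filter_upwards [hfg, self_mem_nhdsWithin] with y hy (hxy : x < y)
  rw [slope_def_field, slope_def_field, hfg₀]
  gcongr

theorem exists_linearMap_le_sublinear_apply_eq {E : Type*} [AddCommGroup E] [Module ℝ E]
    (N : E → ℝ) (N_hom : ∀ c : ℝ, 0 < c → ∀ x, N (c • x) = c * N x)
    (N_add : ∀ x y, N (x + y) ≤ N x + N y) (x : E) :
    ∃ g : E →ₗ[ℝ] ℝ, g x = N x ∧ ∀ y, g y ≤ N y := by
  have N_zero : N 0 = 0 := by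
    have := N_hom 2 two_pos 0
    rw [smul_zero] at this
    linarith
  have hker : ∀ c : ℝ, c • x = 0 → RingHom.id ℝ c • N x = 0 := by
    intro c hc
    rcases smul_eq_zero.1 hc with rfl | rfl <;> simp [N_zero]
  let f := LinearPMap.mkSpanSingleton' x (N x) hker
  obtain ⟨g, hgf, hgN⟩ := exists_extension_of_le_sublinear f N N_hom N_add <| by
    rintro ⟨_, hy⟩
    obtain ⟨c, rfl⟩ := Submodule.mem_span_singleton.1 hy
    rw [LinearPMap.mkSpanSingleton'_apply, RingHom.id_apply, smul_eq_mul]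
    show c * N x ≤ N (c • x)
    rcases lt_trichotomy c 0 with hc | rfl | hc
    · have hsum : N 0 ≤ N x + N (-x) := by simpa using N_add x (-x)
      rw [← neg_smul_neg c x, N_hom (-c) (neg_pos.2 hc)]
      nlinarith
    · simp [N_zero]
    · rw [N_hom c hc]
  refine ⟨g, ?_, hgN⟩
  exact (hgf ⟨x, Submodule.mem_span_singleton_self x⟩).trans
    (LinearPMap.mkSpanSingleton'_apply_self _ _ _ _)

theorem setDist_eq_norm_sub {X : Type*} [NormedAddCommGroup X] {A B : Set X} {a b : X}
    (ha : a ∈ A) (hb : b ∈ B) (h : ∀ a' ∈ A, ∀ b' ∈ B, ‖a - b‖ ≤ ‖a' - b'‖) :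
    setDist A B = ‖a - b‖ :=
  IsLeast.csInf_eq ⟨mem_image2_of_mem ha hb, forall_mem_image2.2 h⟩

section

variable {X : Type*} [NormedAddCommGroup X] [NormedSpace ℝ X]

theorem norm_eq_of_mem_dualityMap {u : X} {f : X →L[ℝ] ℝ} (hf : f ∈ dualityMap u) :
    ‖f‖ = ‖u‖ :=
  ((sq_eq_sq₀ (norm_nonneg _) (norm_nonneg _)).1 hf.2).symm

theorem mem_dualityMap_of_norm_le {u : X} {f : X →L[ℝ] ℝ} (hfu : f u = ‖u‖ ^ 2)
    (hf : ‖f‖ ≤ ‖u‖) : f ∈ dualityMap u := by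
  refine ⟨hfu, ?_⟩
  have : ‖u‖ ^ 2 ≤ ‖f‖ * ‖u‖ := hfu ▸ (le_abs_self _).trans (f.le_opNorm u)
  nlinarith [norm_nonneg f, norm_nonneg u]

theorem dualityMap_neg (u : X) : dualityMap (-u) = -dualityMap u := by
  ext f
  simp [dualityMap]

theorem norm_le_of_sq_le_apply {u v : X} {f : X →L[ℝ] ℝ} (hf : f ∈ dualityMap u)
    (h : ‖u‖ ^ 2 ≤ f v) : ‖u‖ ≤ ‖v‖ := by
  have : f v ≤ ‖u‖ * ‖v‖ :=
    norm_eq_of_mem_dualityMap hf ▸ (le_abs_self _).trans (f.le_opNorm v)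
  nlinarith [norm_nonneg u, norm_nonneg v]

/-- Never a junk value: `t ↦ ‖u + t • w‖` is convex, so its right derivative exists. -/
noncomputable def normDirDeriv (u w : X) : ℝ :=
  derivWithin (fun t : ℝ => ‖u + t • w‖) (Ioi 0) 0

theorem convexOn_norm_add_smul (u w : X) : ConvexOn ℝ univ fun t : ℝ => ‖u + t • w‖ := by
  simpa [Function.comp_def] using
    (convexOn_univ_norm.translate_right u).comp_linearMap (LinearMap.toSpanSingleton ℝ X w)

theorem hasDerivWithinAt_normDirDeriv (u w : X) :
    HasDerivWithinAt (fun t : ℝ => ‖u + t • w‖) (normDirDeriv u w) (Ioi 0) 0 :=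
  (convexOn_norm_add_smul u w).hasDerivWithinAt_rightDeriv_of_mem_interior (by simp)

theorem normDirDeriv_le_norm_add_sub (u w : X) : normDirDeriv u w ≤ ‖u + w‖ - ‖u‖ := by
  have := (convexOn_norm_add_smul u w).rightDeriv_le_slope_of_mem_interior (by simp) trivial
    one_pos
  unfold normDirDeriv
  simpa [slope_def_field] using this

theorem hasDerivWithinAt_norm_add_mul_smul (u w : X) {c : ℝ} (hc : 0 < c) :
    HasDerivWithinAt (fun t : ℝ => ‖u + (t * c) • w‖) (normDirDeriv u w * c) (Ioi 0) 0 :=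
  (hasDerivWithinAt_normDirDeriv u w).comp_of_eq 0 (hasDerivAt_mul_const c).hasDerivWithinAt
    (fun t (ht : 0 < t) => show 0 < t * c by positivity) (zero_mul c).symm

theorem normDirDeriv_smul (u w : X) {c : ℝ} (hc : 0 < c) :
    normDirDeriv u (c • w) = c * normDirDeriv u w := by
  have := hasDerivWithinAt_norm_add_mul_smul u w hc
  simp_rw [mul_smul] at this
  rw [mul_comm]
  exact this.derivWithin (uniqueDiffWithinAt_Ioi 0)

theorem normDirDeriv_add_le (u w₁ w₂ : X) :
    normDirDeriv u (w₁ + w₂) ≤ normDirDeriv u w₁ + normDirDeriv u w₂ := by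
  have hmid : HasDerivWithinAt (fun t : ℝ => (‖u + (t * 2) • w₁‖ + ‖u + (t * 2) • w₂‖) / 2)
      ((normDirDeriv u w₁ * 2 + normDirDeriv u w₂ * 2) / 2) (Ioi 0) 0 :=
    ((hasDerivWithinAt_norm_add_mul_smul u w₁ two_pos).add
      (hasDerivWithinAt_norm_add_mul_smul u w₂ two_pos)).div_const 2
  refine (rightDeriv_le_of_eventually_le (hasDerivWithinAt_normDirDeriv u (w₁ + w₂)) hmid
    (by simp) (Eventually.of_forall fun t => ?_)).trans_eq (by ring)
  have hsplit : u + t • (w₁ + w₂) =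
      (1 / 2 : ℝ) • (u + (t * 2) • w₁) + (1 / 2 : ℝ) • (u + (t * 2) • w₂) := by
    module
  rw [hsplit]
  refine (norm_add_le _ _).trans_eq ?_
  rw [norm_smul, norm_smul]
  norm_num
  ring

theorem normDirDeriv_nonneg {u w : X} (hw : ∀ t ∈ Ioc (0 : ℝ) 1, ‖u‖ ≤ ‖u + t • w‖) :
    0 ≤ normDirDeriv u w :=
  rightDeriv_le_of_eventually_le (hasDerivWithinAt_const 0 _ ‖u‖)
    (hasDerivWithinAt_normDirDeriv u w) (by simp) <| by
    filter_upwards [Ioc_mem_nhdsGT one_pos] with t ht using hw t ht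

theorem exists_mem_dualityMap_apply_eq (u w : X) :
    ∃ f ∈ dualityMap u, f w = ‖u‖ * normDirDeriv u w := by
  obtain ⟨g, hgw, hg⟩ := exists_linearMap_le_sublinear_apply_eq (normDirDeriv u)
    (fun _ hc x => normDirDeriv_smul u x hc) (normDirDeriv_add_le u) w
  have hg_le : ∀ x, g x ≤ ‖x‖ := fun x =>
    (hg x).trans <| (normDirDeriv_le_norm_add_sub u x).trans (by linarith [norm_add_le u x])
  have hgu : g u = ‖u‖ := by
    have hneg : g (-u) ≤ -‖u‖ := (hg (-u)).trans <| by
      simpa using normDirDeriv_le_norm_add_sub u (-u)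
    linarith [hg_le u, map_neg g u]
  have hbound : ∀ x, ‖g x‖ ≤ 1 * ‖x‖ := fun x => by
    rw [one_mul, Real.norm_eq_abs, abs_le]
    constructor <;> linarith [hg_le x, hg_le (-x), map_neg g x, norm_neg x]
  refine ⟨‖u‖ • g.mkContinuous 1 hbound, mem_dualityMap_of_norm_le ?_ ?_, ?_⟩
  · simp [hgu, sq]
  · rw [norm_smul, norm_norm]
    exact mul_le_of_le_one_right (norm_nonneg u) (g.mkContinuous_norm_le zero_le_one hbound)
  · simp [hgw]

theorem dualityMap_apply_nonneg {u w : X} {ws : X →L[ℝ] ℝ} (hws : dualityMap u = {ws})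
    (hw : ∀ t ∈ Ioc (0 : ℝ) 1, ‖u‖ ≤ ‖u + t • w‖) : 0 ≤ ws w := by
  obtain ⟨f, hf, hfw⟩ := exists_mem_dualityMap_apply_eq u w
  rw [hws, mem_singleton_iff] at hf
  rw [← hf, hfw]
  exact mul_nonneg (norm_nonneg u) (normDirDeriv_nonneg hw)

theorem dualityMap_apply_sub_nonpos_of_nearest {C : Set X} (hC : Convex ℝ C) {x y : X}
    (hy : y ∈ C) (hnear : ∀ z ∈ C, ‖x - y‖ ≤ ‖x - z‖) {ws : X →L[ℝ] ℝ}
    (hws : dualityMap (x - y) = {ws}) {z : X} (hz : z ∈ C) : ws (z - y) ≤ 0 := by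
  have := dualityMap_apply_nonneg hws (w := y - z) fun t ht => by
    have hmem := hC.add_smul_sub_mem hy hz (Ioc_subset_Icc_self ht)
    convert hnear _ hmem using 2
    module
  rwa [← neg_sub, map_neg, neg_nonneg] at this

end

theorem dist_eq_of_mutual_nearest_points_general
    {X : Type*} [NormedAddCommGroup X] [NormedSpace ℝ X]
    (C₁ C₂ : Set X)
    (hconv₁ : Convex ℝ C₁) (hconv₂ : Convex ℝ C₂)
    (x₁ : X) (x₂ : X) (hx₁ : x₁ ∈ C₁) (hx₂ : x₂ ∈ C₂)
    (ws : X →L[ℝ] ℝ) (hws : dualityMap (x₂ - x₁) = {ws})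
    (hnear₁ : ∀ y ∈ C₁, ‖x₂ - x₁‖ ≤ ‖x₂ - y‖)
    (hnear₂ : ∀ y ∈ C₂, ‖x₁ - x₂‖ ≤ ‖x₁ - y‖) :
    ‖x₁ - x₂‖ = setDist C₁ C₂ := by
  have hws' : dualityMap (x₁ - x₂) = {-ws} := by
    rw [← neg_sub, dualityMap_neg, hws, neg_singleton]
  have hws_mem : ws ∈ dualityMap (x₂ - x₁) := hws ▸ mem_singleton ws
  refine (setDist_eq_norm_sub hx₁ hx₂ fun a ha b hb => ?_).symm
  have h₁ : ws (a - x₁) ≤ 0 := dualityMap_apply_sub_nonpos_of_nearest hconv₁ hx₁ hnear₁ hws ha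
  have h₂ : 0 ≤ ws (b - x₂) :=
    neg_nonpos.1 (dualityMap_apply_sub_nonpos_of_nearest hconv₂ hx₂ hnear₂ hws' hb)
  have hsplit : ws (b - a) = ws (x₂ - x₁) + ws (b - x₂) - ws (a - x₁) := by
    rw [← map_add, ← map_sub]
    congr 1
    abel
  rw [norm_sub_rev, norm_sub_rev a]
  refine norm_le_of_sq_le_apply hws_mem ?_
  rw [hsplit, hws_mem.1]
  linarith

theorem dist_eq_of_mutual_nearest_points
    {X : Type*} [NormedAddCommGroup X] [NormedSpace ℝ X] [CompleteSpace X]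
    (hsmooth : ∀ y : X, y ≠ 0 → (dualityMap y).Subsingleton)
    (C₁ C₂ : Set X) (hC₁ : IsClosed C₁) (hC₂ : IsClosed C₂)
    (hconv₁ : Convex ℝ C₁) (hconv₂ : Convex ℝ C₂)
    (x₁ : X) (x₂ : X) (hx₁ : x₁ ∈ C₁) (hx₂ : x₂ ∈ C₂) (hne : x₁ ≠ x₂)
    (ws : X →L[ℝ] ℝ) (hws : dualityMap (x₂ - x₁) = {ws})
    (hnear₁ : ∀ y ∈ C₁, ‖x₂ - x₁‖ ≤ ‖x₂ - y‖)
    (hnear₂ : ∀ y ∈ C₂, ‖x₁ - x₂‖ ≤ ‖x₁ - y‖) :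
    ‖x₁ - x₂‖ = setDist C₁ C₂ :=
  dist_eq_of_mutual_nearest_points_general C₁ C₂ hconv₁ hconv₂ x₁ x₂ hx₁ hx₂ ws hws hnear₁ hnear₂
end

section
/- Let X be a reflexive, smooth real Banach space and C₁, C₂ disjoint nonempty closed convex subsets such that nearest points exist where needed. Define the two-player game where player i picks xᵢ ∈ Cᵢ, the hyperplane H(x₁,x₂) = {x : w(x) = w((x₁+x₂)/2)} with w the unique duality-mapping element of x₁ − x₂, and payoff vᵢ(x₁,x₂) = dist(H(x₁,x₂), Cᵢ). Then (x̄₁, x̄₂) is a Nash equilibrium of this game if and only if ‖x̄₁ − x̄₂‖ = dist(C₁, C₂); moreover at equilibrium both payoffs equal ½‖x̄₁ − x̄₂‖. -/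
/-- The separating hyperplane halfway between `x₁` and `x₂`, defined through the
duality-mapping selection `w`. -/
def gameHyperplane {X : Type*} [NormedAddCommGroup X] [NormedSpace ℝ X]
    (w : X → (X →L[ℝ] ℝ)) (x₁ x₂ : X) : Set X :=
  {x : X | w (x₁ - x₂) x = w (x₁ - x₂) ((1 / 2 : ℝ) • (x₁ + x₂))}

open Metric

section setDist

variable {X : Type*} [NormedAddCommGroup X] {A B : Set X}

lemma setDist_le_norm_sub {a b : X} (ha : a ∈ A) (hb : b ∈ B) : setDist A B ≤ ‖a - b‖ :=
  csInf_le ⟨0, by rintro _ ⟨a, -, b, -, rfl⟩; exact norm_nonneg _⟩ ⟨a, ha, b, hb, rfl⟩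

lemma le_setDist {r : ℝ} (hA : A.Nonempty) (hB : B.Nonempty)
    (h : ∀ a ∈ A, ∀ b ∈ B, r ≤ ‖a - b‖) : r ≤ setDist A B :=
  le_csInf (hA.image2 hB) (by rintro _ ⟨a, ha, b, hb, rfl⟩; exact h a ha b hb)

end setDist

section dualityMap

variable {X : Type*} [NormedAddCommGroup X] [NormedSpace ℝ X] {F : X →L[ℝ] ℝ} {y : X}

lemma norm_eq_of_mem_dualityMap_s8 (hF : F ∈ dualityMap y) : ‖F‖ = ‖y‖ :=
  (pow_left_inj₀ (norm_nonneg _) (norm_nonneg _) two_ne_zero).1 hF.2.symm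

lemma abs_apply_le_of_mem_dualityMap (hF : F ∈ dualityMap y) (v : X) : |F v| ≤ ‖y‖ * ‖v‖ :=
  norm_eq_of_mem_dualityMap_s8 hF ▸ F.le_opNorm v

lemma neg_mem_dualityMap_neg (hF : F ∈ dualityMap y) : -F ∈ dualityMap (-y) := by
  simpa [dualityMap] using hF

lemma smul_mem_dualityMap (hF : F y = ‖F‖ * ‖y‖) (hF₀ : F ≠ 0) :
    (‖y‖ / ‖F‖) • F ∈ dualityMap y := by
  have hF_pos : 0 < ‖F‖ := norm_pos_iff.2 hF₀
  constructor
  · rw [smul_apply, hF, smul_eq_mul]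
    field_simp
  · rw [norm_smul, norm_div, norm_norm, norm_norm]
    field_simp

lemma opNorm_mul_le_of_forall_mem_ball_lt (f : X →L[ℝ] ℝ) {z : X} {r u : ℝ} (hr : 0 < r)
    (h : ∀ x ∈ ball z r, f x < u) : ‖f‖ * r ≤ u - f z := by
  have hclosed : ∀ x ∈ closedBall z r, f x ≤ u := by
    rw [← closure_ball z hr.ne']
    exact (isClosed_le f.continuous continuous_const).closure_subset_iff.2 fun x hx => (h x hx).le
  refine (le_div_iff₀ hr).1 (f.opNorm_bound_of_ball_bound hr _ fun x hx => abs_le.2 ⟨?_, ?_⟩)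
  · have := hclosed (z - x) (by simpa [mem_closedBall_iff_norm] using hx)
    simp only [map_sub] at this
    linarith
  · have := hclosed (z + x) (by simpa [mem_closedBall_iff_norm] using hx)
    simp only [map_add] at this
    linarith

lemma exists_mem_dualityMap_forall_apply_sub_nonneg {C : Set X} (hC : Convex ℝ C) {p z : X}
    (hp : p ∈ C) (hpz : p ≠ z) (hmin : ∀ c ∈ C, ‖z - p‖ ≤ ‖z - c‖) :
    ∃ F ∈ dualityMap (p - z), ∀ c ∈ C, 0 ≤ F (c - p) := by
  have hr : 0 < ‖p - z‖ := norm_pos_iff.2 (sub_ne_zero.2 hpz)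
  have hdisj : Disjoint (ball z ‖p - z‖) C := Set.disjoint_left.2 fun b hb hbC => by
    rw [mem_ball_iff_norm', norm_sub_rev p] at hb
    exact (hmin b hbC).not_gt hb
  obtain ⟨f, u, hball, hCu⟩ :=
    geometric_hahn_banach_open (convex_ball z _) isOpen_ball hC hdisj
  have hnorm := opNorm_mul_le_of_forall_mem_ball_lt f hr hball
  have hz := hball z (mem_ball_self hr)
  have hp' := hCu p hp
  have hattain : f (p - z) = ‖f‖ * ‖p - z‖ :=
    le_antisymm ((le_abs_self _).trans (f.le_opNorm _)) (by rw [map_sub]; linarith)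
  have hf₀ : f ≠ 0 := by
    rintro rfl
    simp only [zero_apply] at hz hp'
    linarith
  refine ⟨_, smul_mem_dualityMap hattain hf₀, fun c hc => ?_⟩
  rw [smul_apply, smul_eq_mul, map_sub]
  rw [map_sub] at hattain
  exact mul_nonneg (by positivity) (by linarith [hCu c hc])

end dualityMap

section gameHyperplane

variable {X : Type*} [NormedAddCommGroup X] [NormedSpace ℝ X] {w : X → (X →L[ℝ] ℝ)}
  {x₁ x₂ : X} {A : Set X}

lemma apply_sub_apply_midpoint_eq_add {F : X →L[ℝ] ℝ} (hF : F ∈ dualityMap (x₁ - x₂)) (a : X) :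
    F a - F ((1 / 2 : ℝ) • (x₁ + x₂)) = F (a - x₁) + ‖x₁ - x₂‖ ^ 2 / 2 := by
  have := hF.1
  simp only [map_sub, map_smul, map_add, smul_eq_mul] at this ⊢
  linarith

lemma apply_sub_apply_midpoint_eq_sub {F : X →L[ℝ] ℝ} (hF : F ∈ dualityMap (x₁ - x₂)) (a : X) :
    F a - F ((1 / 2 : ℝ) • (x₁ + x₂)) = F (a - x₂) - ‖x₁ - x₂‖ ^ 2 / 2 := by
  have := hF.1
  simp only [map_sub, map_smul, map_add, smul_eq_mul] at this ⊢
  linarith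

lemma setDist_gameHyperplane_le (hw : w (x₁ - x₂) ∈ dualityMap (x₁ - x₂)) (h : x₁ ≠ x₂)
    {a : X} (ha : a ∈ A) :
    setDist (gameHyperplane w x₁ x₂) A ≤
      |w (x₁ - x₂) a - w (x₁ - x₂) ((1 / 2 : ℝ) • (x₁ + x₂))| / ‖x₁ - x₂‖ := by
  set c := w (x₁ - x₂) ((1 / 2 : ℝ) • (x₁ + x₂))
  have hn : 0 < ‖x₁ - x₂‖ := norm_pos_iff.2 (sub_ne_zero.2 h)
  have hproj : a + ((c - w (x₁ - x₂) a) / ‖x₁ - x₂‖ ^ 2) • (x₁ - x₂) ∈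
      gameHyperplane w x₁ x₂ := by
    change w (x₁ - x₂) _ = c
    rw [map_add, map_smul, smul_eq_mul, hw.1]
    field_simp
    ring
  refine (setDist_le_norm_sub hproj ha).trans_eq ?_
  rw [add_sub_cancel_left, norm_smul, norm_div, Real.norm_eq_abs, abs_sub_comm, norm_pow,
    norm_norm]
  field_simp

lemma le_setDist_gameHyperplane (hw : w (x₁ - x₂) ∈ dualityMap (x₁ - x₂)) (h : x₁ ≠ x₂)
    (hA : A.Nonempty) {r : ℝ}
    (hr : ∀ a ∈ A, r * ‖x₁ - x₂‖ ≤ |w (x₁ - x₂) a - w (x₁ - x₂) ((1 / 2 : ℝ) • (x₁ + x₂))|) :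
    r ≤ setDist (gameHyperplane w x₁ x₂) A := by
  have hn : 0 < ‖x₁ - x₂‖ := norm_pos_iff.2 (sub_ne_zero.2 h)
  refine le_setDist ⟨(1 / 2 : ℝ) • (x₁ + x₂), rfl⟩ hA fun q hq a ha => ?_
  have hdist := abs_apply_le_of_mem_dualityMap hw (a - q)
  rw [map_sub, hq, norm_sub_rev a q] at hdist
  exact le_of_mul_le_mul_right ((hr a ha).trans (hdist.trans_eq (mul_comm _ _))) hn

lemma setDist_gameHyperplane_le_max (hw : w (x₁ - x₂) ∈ dualityMap (x₁ - x₂)) (h : x₁ ≠ x₂)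
    (hA : Convex ℝ A) (hx₁ : x₁ ∈ A) {a : X} (ha : a ∈ A) :
    setDist (gameHyperplane w x₁ x₂) A ≤
      max 0 ((w (x₁ - x₂) a - w (x₁ - x₂) ((1 / 2 : ℝ) • (x₁ + x₂))) / ‖x₁ - x₂‖) := by
  rcases le_total (w (x₁ - x₂) ((1 / 2 : ℝ) • (x₁ + x₂))) (w (x₁ - x₂) a) with hpos | hneg
  · rw [← abs_of_nonneg (sub_nonneg.2 hpos)]
    exact le_max_of_le_right (setDist_gameHyperplane_le hw h ha)
  · have hx₁_pos := apply_sub_apply_midpoint_eq_add hw x₁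
    rw [sub_self, map_zero, zero_add] at hx₁_pos
    obtain ⟨q, hq, hqH⟩ := hA.isPreconnected.intermediate_value ha hx₁
      (w (x₁ - x₂)).continuous.continuousOn ⟨hneg, by nlinarith [sq_nonneg ‖x₁ - x₂‖]⟩
    exact le_max_of_le_left
      ((setDist_le_norm_sub (A := gameHyperplane w x₁ x₂) hqH hq).trans_eq (by simp))

lemma setDist_gameHyperplane_le_max_norm (hw : w (x₁ - x₂) ∈ dualityMap (x₁ - x₂))
    (h : x₁ ≠ x₂) (hA : Convex ℝ A) (hx₁ : x₁ ∈ A) {a : X} (ha : a ∈ A) :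
    setDist (gameHyperplane w x₁ x₂) A ≤ max 0 (‖a - x₂‖ - ‖x₁ - x₂‖ / 2) := by
  have hn : 0 < ‖x₁ - x₂‖ := norm_pos_iff.2 (sub_ne_zero.2 h)
  refine (setDist_gameHyperplane_le_max hw h hA hx₁ ha).trans (max_le_max le_rfl ?_)
  rw [div_le_iff₀ hn, apply_sub_apply_midpoint_eq_sub hw]
  nlinarith [(le_abs_self _).trans (abs_apply_le_of_mem_dualityMap hw (a - x₂))]

lemma setDist_gameHyperplane_le_half_of_norm_sub_le (hw : w (x₁ - x₂) ∈ dualityMap (x₁ - x₂))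
    (h : x₁ ≠ x₂) (hA : Convex ℝ A) (hx₁ : x₁ ∈ A) {a : X} (ha : a ∈ A)
    (hle : ‖a - x₂‖ ≤ ‖x₁ - x₂‖) :
    setDist (gameHyperplane w x₁ x₂) A ≤ ‖a - x₂‖ / 2 :=
  (setDist_gameHyperplane_le_max_norm hw h hA hx₁ ha).trans
    (max_le (by positivity) (by linarith))

lemma norm_mul_setDist_gameHyperplane_le (hw : w (x₁ - x₂) ∈ dualityMap (x₁ - x₂))
    (h : x₁ ≠ x₂) (hA : Convex ℝ A) (hx₁ : x₁ ∈ A)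
    (hpos : 0 < setDist (gameHyperplane w x₁ x₂) A) {a : X} (ha : a ∈ A) :
    ‖x₁ - x₂‖ * setDist (gameHyperplane w x₁ x₂) A ≤
      w (x₁ - x₂) a - w (x₁ - x₂) ((1 / 2 : ℝ) • (x₁ + x₂)) := by
  have hn : 0 < ‖x₁ - x₂‖ := norm_pos_iff.2 (sub_ne_zero.2 h)
  have := setDist_gameHyperplane_le_max hw h hA hx₁ ha
  rw [le_max_iff, or_iff_right hpos.not_ge, le_div_iff₀ hn] at this
  linarith

lemma apply_sub_comm_eq_neg (hw₁ : w (x₁ - x₂) ∈ dualityMap (x₁ - x₂))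
    (hw₂ : dualityMap (x₂ - x₁) = {w (x₂ - x₁)}) : w (x₂ - x₁) = -w (x₁ - x₂) := by
  have := neg_mem_dualityMap_neg hw₁
  rw [neg_sub, hw₂] at this
  exact this.symm

lemma gameHyperplane_comm (hw₁ : w (x₁ - x₂) ∈ dualityMap (x₁ - x₂))
    (hw₂ : dualityMap (x₂ - x₁) = {w (x₂ - x₁)}) :
    gameHyperplane w x₂ x₁ = gameHyperplane w x₁ x₂ := by
  ext x
  simp only [gameHyperplane, apply_sub_comm_eq_neg hw₁ hw₂, neg_apply, neg_inj,
    add_comm x₂]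

lemma setDist_gameHyperplane_eq_of_forall_norm_sub_le {C : Set X} {p z : X}
    (hw : dualityMap (p - z) = {w (p - z)}) (hC : Convex ℝ C) (hp : p ∈ C) (hpz : p ≠ z)
    (hmin : ∀ c ∈ C, ‖z - p‖ ≤ ‖z - c‖) :
    setDist (gameHyperplane w p z) C = ‖p - z‖ / 2 := by
  obtain ⟨F, hF, hFC⟩ := exists_mem_dualityMap_forall_apply_sub_nonneg hC hp hpz hmin
  rw [hw, Set.mem_singleton_iff] at hF
  subst hF
  have hmem : w (p - z) ∈ dualityMap (p - z) := hw.ge rfl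
  have hn : 0 < ‖p - z‖ := norm_pos_iff.2 (sub_ne_zero.2 hpz)
  refine le_antisymm ((setDist_gameHyperplane_le hmem hpz hp).trans_eq ?_)
    (le_setDist_gameHyperplane hmem hpz ⟨p, hp⟩ fun c hc => ?_)
  · rw [apply_sub_apply_midpoint_eq_add hmem, sub_self, map_zero, zero_add,
      abs_of_nonneg (by positivity)]
    field_simp
  · have hc' := hFC c hc
    rw [apply_sub_apply_midpoint_eq_add hmem, abs_of_nonneg (by positivity)]
    linarith

lemma setDist_gameHyperplane_add_le_setDist {B : Set X}
    (hw₁ : w (x₁ - x₂) ∈ dualityMap (x₁ - x₂)) (hw₂ : dualityMap (x₂ - x₁) = {w (x₂ - x₁)})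
    (h : x₁ ≠ x₂) (hA : Convex ℝ A) (hB : Convex ℝ B) (hx₁ : x₁ ∈ A) (hx₂ : x₂ ∈ B)
    (hposA : 0 < setDist (gameHyperplane w x₁ x₂) A)
    (hposB : 0 < setDist (gameHyperplane w x₁ x₂) B) :
    setDist (gameHyperplane w x₁ x₂) A + setDist (gameHyperplane w x₁ x₂) B ≤ setDist A B := by
  have hn : 0 < ‖x₁ - x₂‖ := norm_pos_iff.2 (sub_ne_zero.2 h)
  have hcomm := gameHyperplane_comm hw₁ hw₂
  have hB' : ∀ b ∈ B, ‖x₁ - x₂‖ * setDist (gameHyperplane w x₁ x₂) B ≤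
      w (x₁ - x₂) ((1 / 2 : ℝ) • (x₁ + x₂)) - w (x₁ - x₂) b := by
    intro b hb
    have := norm_mul_setDist_gameHyperplane_le (hw₂.ge rfl) h.symm hB hx₂ (hcomm ▸ hposB) hb
    rwa [hcomm, apply_sub_comm_eq_neg hw₁ hw₂, norm_sub_rev, add_comm x₂, neg_apply, neg_apply,
      neg_sub_neg] at this
  refine le_setDist ⟨x₁, hx₁⟩ ⟨x₂, hx₂⟩ fun a ha b hb => le_of_mul_le_mul_left ?_ hn
  calc ‖x₁ - x₂‖ * (setDist (gameHyperplane w x₁ x₂) A + setDist (gameHyperplane w x₁ x₂) B)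
      ≤ w (x₁ - x₂) a - w (x₁ - x₂) b := by
        linarith [norm_mul_setDist_gameHyperplane_le hw₁ h hA hx₁ hposA ha, hB' b hb]
    _ = w (x₁ - x₂) (a - b) := (map_sub _ _ _).symm
    _ ≤ ‖x₁ - x₂‖ * ‖a - b‖ := (le_abs_self _).trans (abs_apply_le_of_mem_dualityMap hw₁ _)

lemma norm_sub_le_setDist_of_half_norm_le_setDist_gameHyperplane {B : Set X} {p₁ p₂ : X}
    (hw₁ : w (x₁ - x₂) ∈ dualityMap (x₁ - x₂)) (hw₂ : dualityMap (x₂ - x₁) = {w (x₂ - x₁)})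
    (h : x₁ ≠ x₂) (hA : Convex ℝ A) (hB : Convex ℝ B) (hx₁ : x₁ ∈ A) (hx₂ : x₂ ∈ B)
    (hp₁ : p₁ ∈ A) (hp₂ : p₂ ∈ B) (hp₁x₂ : p₁ ≠ x₂) (hx₁p₂ : x₁ ≠ p₂)
    (hP₁ : ‖p₁ - x₂‖ / 2 ≤ setDist (gameHyperplane w x₁ x₂) A)
    (hP₂ : ‖x₁ - p₂‖ / 2 ≤ setDist (gameHyperplane w x₁ x₂) B) :
    ‖x₁ - x₂‖ ≤ setDist A B := by
  have hs₁ : 0 < ‖p₁ - x₂‖ := norm_pos_iff.2 (sub_ne_zero.2 hp₁x₂)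
  have hs₂ : 0 < ‖x₁ - p₂‖ := norm_pos_iff.2 (sub_ne_zero.2 hx₁p₂)
  have hsum := setDist_gameHyperplane_add_le_setDist hw₁ hw₂ h hA hB hx₁ hx₂
    (by linarith) (by linarith)
  have hP₁' := setDist_gameHyperplane_le_max_norm hw₁ h hA hx₁ hp₁
  rw [le_max_iff, or_iff_right (by linarith)] at hP₁'
  linarith [setDist_le_norm_sub hx₁ hp₂]

end gameHyperplane

theorem nash_equilibrium_iff_nearest_points_general
    {X : Type*} [NormedAddCommGroup X] [NormedSpace ℝ X]
    (w : X → (X →L[ℝ] ℝ))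
    (hsmooth : ∀ y : X, y ≠ 0 → dualityMap y = {w y})
    (C₁ C₂ : Set X)
    (hconv₁ : Convex ℝ C₁) (hconv₂ : Convex ℝ C₂)
    (hdisj : C₁ ∩ C₂ = ∅)
    (hproj₁ : ∀ z : X, ∃ p ∈ C₁, ∀ y ∈ C₁, ‖z - p‖ ≤ ‖z - y‖)
    (hproj₂ : ∀ z : X, ∃ p ∈ C₂, ∀ y ∈ C₂, ‖z - p‖ ≤ ‖z - y‖)
    (xb₁ : X) (xb₂ : X) (hxb₁ : xb₁ ∈ C₁) (hxb₂ : xb₂ ∈ C₂) :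
    ((∀ y₁ ∈ C₁, setDist (gameHyperplane w y₁ xb₂) C₁ ≤
        setDist (gameHyperplane w xb₁ xb₂) C₁) ∧
     (∀ y₂ ∈ C₂, setDist (gameHyperplane w xb₁ y₂) C₂ ≤
        setDist (gameHyperplane w xb₁ xb₂) C₂)
      ↔ ‖xb₁ - xb₂‖ = setDist C₁ C₂) ∧
    (‖xb₁ - xb₂‖ = setDist C₁ C₂ →
      setDist (gameHyperplane w xb₁ xb₂) C₁ = ‖xb₁ - xb₂‖ / 2 ∧
      setDist (gameHyperplane w xb₁ xb₂) C₂ = ‖xb₁ - xb₂‖ / 2) := by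
  have hw {a b : X} (h : a ≠ b) : dualityMap (a - b) = {w (a - b)} :=
    hsmooth _ (sub_ne_zero.2 h)
  have hne {a b : X} (ha : a ∈ C₁) (hb : b ∈ C₂) : a ≠ b :=
    Set.disjoint_left.1 (Set.disjoint_iff_inter_eq_empty.2 hdisj) ha ∘ (· ▸ hb)
  have hcomm {b : X} (hb : b ∈ C₂) : gameHyperplane w b xb₁ = gameHyperplane w xb₁ b :=
    gameHyperplane_comm ((hw (hne hxb₁ hb)).ge rfl) (hw (hne hxb₁ hb).symm)
  have payoff₁ {p : X} (hp : p ∈ C₁) (hmin : ∀ c ∈ C₁, ‖xb₂ - p‖ ≤ ‖xb₂ - c‖) :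
      setDist (gameHyperplane w p xb₂) C₁ = ‖p - xb₂‖ / 2 :=
    setDist_gameHyperplane_eq_of_forall_norm_sub_le (hw (hne hp hxb₂)) hconv₁ hp (hne hp hxb₂) hmin
  have payoff₂ {p : X} (hp : p ∈ C₂) (hmin : ∀ c ∈ C₂, ‖xb₁ - p‖ ≤ ‖xb₁ - c‖) :
      setDist (gameHyperplane w xb₁ p) C₂ = ‖xb₁ - p‖ / 2 := by
    rw [← hcomm hp, norm_sub_rev]
    exact setDist_gameHyperplane_eq_of_forall_norm_sub_le (hw (hne hxb₁ hp).symm) hconv₂ hp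
      (hne hxb₁ hp).symm hmin
  have hx := hne hxb₁ hxb₂
  have hpayoffs (hd : ‖xb₁ - xb₂‖ = setDist C₁ C₂) :
      setDist (gameHyperplane w xb₁ xb₂) C₁ = ‖xb₁ - xb₂‖ / 2 ∧
      setDist (gameHyperplane w xb₁ xb₂) C₂ = ‖xb₁ - xb₂‖ / 2 :=
    ⟨payoff₁ hxb₁ fun c hc => by
      rw [norm_sub_rev, hd, norm_sub_rev]; exact setDist_le_norm_sub hc hxb₂,
     payoff₂ hxb₂ fun c hc => hd ▸ setDist_le_norm_sub hxb₁ hc⟩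
  refine ⟨⟨fun ⟨h₁, h₂⟩ => ?_, fun hd => ?_⟩, hpayoffs⟩
  · obtain ⟨p₁, hp₁, hp₁_min⟩ := hproj₁ xb₂
    obtain ⟨p₂, hp₂, hp₂_min⟩ := hproj₂ xb₁
    refine le_antisymm ?_ (setDist_le_norm_sub hxb₁ hxb₂)
    exact norm_sub_le_setDist_of_half_norm_le_setDist_gameHyperplane ((hw hx).ge rfl) (hw hx.symm)
      hx hconv₁ hconv₂ hxb₁ hxb₂ hp₁ hp₂ (hne hp₁ hxb₂) (hne hxb₁ hp₂)
      ((payoff₁ hp₁ hp₁_min).symm.trans_le (h₁ p₁ hp₁))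
      ((payoff₂ hp₂ hp₂_min).symm.trans_le (h₂ p₂ hp₂))
  · obtain ⟨e₁, e₂⟩ := hpayoffs hd
    refine ⟨fun y₁ hy₁ => e₁ ▸ ?_, fun y₂ hy₂ => e₂ ▸ hcomm hy₂ ▸ ?_⟩
    · exact setDist_gameHyperplane_le_half_of_norm_sub_le ((hw (hne hy₁ hxb₂)).ge rfl)
        (hne hy₁ hxb₂) hconv₁ hy₁ hxb₁ (hd ▸ setDist_le_norm_sub hy₁ hxb₂)
    · rw [norm_sub_rev xb₁]
      exact setDist_gameHyperplane_le_half_of_norm_sub_le ((hw (hne hxb₁ hy₂).symm).ge rfl)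
        (hne hxb₁ hy₂).symm hconv₂ hy₂ hxb₂
        (by rw [norm_sub_rev, norm_sub_rev y₂, hd]; exact setDist_le_norm_sub hxb₁ hy₂)

theorem nash_equilibrium_iff_nearest_points
    {X : Type*} [NormedAddCommGroup X] [NormedSpace ℝ X] [CompleteSpace X]
    (w : X → (X →L[ℝ] ℝ))
    (hsmooth : ∀ y : X, y ≠ 0 → dualityMap y = {w y})
    (C₁ C₂ : Set X) (hC₁ : IsClosed C₁) (hC₂ : IsClosed C₂)
    (hconv₁ : Convex ℝ C₁) (hconv₂ : Convex ℝ C₂)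
    (hne₁ : C₁.Nonempty) (hne₂ : C₂.Nonempty) (hdisj : C₁ ∩ C₂ = ∅)
    (hproj₁ : ∀ z : X, ∃ p ∈ C₁, ∀ y ∈ C₁, ‖z - p‖ ≤ ‖z - y‖)
    (hproj₂ : ∀ z : X, ∃ p ∈ C₂, ∀ y ∈ C₂, ‖z - p‖ ≤ ‖z - y‖)
    (xb₁ : X) (xb₂ : X) (hxb₁ : xb₁ ∈ C₁) (hxb₂ : xb₂ ∈ C₂) :
    ((∀ y₁ ∈ C₁, setDist (gameHyperplane w y₁ xb₂) C₁ ≤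
        setDist (gameHyperplane w xb₁ xb₂) C₁) ∧
     (∀ y₂ ∈ C₂, setDist (gameHyperplane w xb₁ y₂) C₂ ≤
        setDist (gameHyperplane w xb₁ xb₂) C₂)
      ↔ ‖xb₁ - xb₂‖ = setDist C₁ C₂) ∧
    (‖xb₁ - xb₂‖ = setDist C₁ C₂ →
      setDist (gameHyperplane w xb₁ xb₂) C₁ = ‖xb₁ - xb₂‖ / 2 ∧
      setDist (gameHyperplane w xb₁ xb₂) C₂ = ‖xb₁ - xb₂‖ / 2) :=
  nash_equilibrium_iff_nearest_points_general w hsmooth C₁ C₂ hconv₁ hconv₂ hdisj hproj₁ hproj₂ xb₁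
    xb₂ hxb₁ hxb₂
end

section
/- Let X be a real Banach space, K₁, …, K_m ⊆ X weakly compact convex uncertainty sets, yᵢ ∈ {−1, +1}, and suppose co(⋃_{yᵢ=+1} Kᵢ) ∩ co(⋃_{yᵢ=−1} Kᵢ) = ∅. Then the robust SVM problem: minimize ½‖w‖² over (w, b) ∈ X* × ℝ subject to inf_{xᵢ ∈ Kᵢ} yᵢ(w(xᵢ) + b) ≥ 1 for all i, admits at least one optimal solution. -/
/-!
Pass to the weak topology of `X`. There the convex hulls of the two classes are compact (finite
unions of compact convex sets) and disjoint, so Hahn–Banach separates them strictly; rescaling the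
separating functional gives a feasible pair `(w₀, b₀)`. The feasible set is weak-* closed in
`X* × ℝ`, being cut out by the half-spaces `1 ≤ yᵢ (w x + b)`. When both classes contain a point,
the constraints bound `|b|` by a multiple of `‖w‖`, so by Banach–Alaoglu the feasible pairs with
`‖w‖ ≤ ‖w₀‖` form a weak-* compact set, on which the weak-* lower semicontinuous norm attains its
minimum. If a class is empty, `w = 0` is feasible and hence optimal.
-/

open Set

section ConvexHull

variable {E : Type*} [AddCommGroup E] [Module ℝ E]

theorem convexJoin_eq_image (s t : Set E) :
    convexJoin ℝ s t =
      (fun q : ℝ × E × E => (1 - q.1) • q.2.1 + q.1 • q.2.2) '' (Icc 0 1 ×ˢ s ×ˢ t) := by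
  ext z
  simp only [mem_convexJoin, segment_eq_image, mem_image, mem_prod, Prod.exists]
  constructor
  · rintro ⟨x, hx, y, hy, θ, hθ, rfl⟩
    exact ⟨θ, x, y, ⟨hθ, hx, hy⟩, rfl⟩
  · rintro ⟨θ, x, y, ⟨hθ, hx, hy⟩, rfl⟩
    exact ⟨x, hx, y, hy, θ, hθ, rfl⟩

variable [TopologicalSpace E] [IsTopologicalAddGroup E] [ContinuousSMul ℝ E]

theorem IsCompact.convexJoin {s t : Set E} (hs : IsCompact s) (ht : IsCompact t) :
    IsCompact (convexJoin ℝ s t) := by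
  rw [convexJoin_eq_image]
  exact (isCompact_Icc.prod (hs.prod ht)).image (by fun_prop)

theorem Set.Finite.isCompact_convexHull_biUnion {ι : Type*} {s : Set ι} (hs : s.Finite)
    {K : ι → Set E} (hc : ∀ i, IsCompact (K i)) (hv : ∀ i, Convex ℝ (K i)) :
    IsCompact (convexHull ℝ (⋃ i ∈ s, K i)) := by
  induction s, hs using Set.Finite.induction_on with
  | empty => simp
  | @insert a s _ _ ih =>
    rw [biUnion_insert]
    rcases (K a).eq_empty_or_nonempty with ha | ha
    · rwa [ha, empty_union]
    rcases (⋃ i ∈ s, K i).eq_empty_or_nonempty with hs | hs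
    · rw [hs, union_empty, (hv a).convexHull_eq]
      exact hc a
    rw [convexHull_union ha hs, (hv a).convexHull_eq]
    exact (hc a).convexJoin ih

end ConvexHull

theorem exists_affine_separation {E : Type*} [AddCommGroup E] [Module ℝ E] [TopologicalSpace E]
    [IsTopologicalAddGroup E] [ContinuousSMul ℝ E] [LocallyConvexSpace ℝ E] {s t : Set E}
    (hs₁ : Convex ℝ s) (hs₂ : IsCompact s) (ht₁ : Convex ℝ t) (ht₂ : IsClosed t)
    (hst : Disjoint s t) :
    ∃ (f : StrongDual ℝ E) (b : ℝ), (∀ x ∈ s, f x + b ≤ -1) ∧ ∀ x ∈ t, 1 ≤ f x + b := by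
  obtain ⟨f, u, v, hfs, huv, hft⟩ := geometric_hahn_banach_compact_closed hs₁ hs₂ ht₁ ht₂ hst
  have hvu : 0 < v - u := sub_pos.2 huv
  -- rescale `f` so that the slab `u < f < v` becomes `-1 < f + b < 1`
  refine ⟨(2 / (v - u)) • f, -(u + v) / (v - u), fun x hx => ?_, fun x hx => ?_⟩
  · have := hfs x hx
    rw [smul_apply, smul_eq_mul, div_mul_eq_mul_div, ← add_div, div_le_iff₀ hvu]
    linarith
  · have := hft x hx
    rw [smul_apply, smul_eq_mul, div_mul_eq_mul_div, ← add_div, le_div_iff₀ hvu]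
    linarith

theorem exists_isMinOn_of_isCompact_inter_sublevel {α β : Type*} [TopologicalSpace α]
    [LinearOrder β] {f : α → β} (hf : LowerSemicontinuous f) {S : Set α} {a : α} (ha : a ∈ S)
    (hS : IsCompact (S ∩ {x | f x ≤ f a})) : ∃ x ∈ S, IsMinOn f S x := by
  obtain ⟨x, ⟨hxS, hxa⟩, hmin⟩ :=
    LowerSemicontinuousOn.exists_isMinOn (s := S ∩ {x | f x ≤ f a}) ⟨a, ha, le_rfl⟩ hS
      (hf.lowerSemicontinuousOn _)
  refine ⟨x, hxS, fun z hz => ?_⟩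
  rcases le_total (f z) (f a) with hza | haz
  · exact hmin ⟨hz, hza⟩
  · exact hxa.trans haz

namespace WeakDual

variable {𝕜 E : Type*} [NontriviallyNormedField 𝕜] [SeminormedAddCommGroup E] [NormedSpace 𝕜 E]

theorem lowerSemicontinuous_norm : LowerSemicontinuous fun w : WeakDual 𝕜 E => ‖toStrongDual w‖ :=
  lowerSemicontinuous_iff_isClosed_preimage.2 fun r => by
    simpa [Set.preimage, mem_closedBall_zero_iff] using isClosed_closedBall (0 : StrongDual 𝕜 E) r

end WeakDual

section RobustSVM

open Metric WeakDual

variable {X : Type*} [NormedAddCommGroup X] [NormedSpace ℝ X] {ι : Type*}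

/-- Lives in `WeakDual ℝ X × ℝ`, so that it carries the weak-* topology. -/
def svmFeasibleSet (K : ι → Set X) (y : ι → ℝ) : Set (WeakDual ℝ X × ℝ) :=
  {p | ∀ i, ∀ x ∈ K i, 1 ≤ y i * (p.1 x + p.2)}

variable {K : ι → Set X} {y : ι → ℝ}

theorem isClosed_svmFeasibleSet : IsClosed (svmFeasibleSet K y) := by
  simp only [svmFeasibleSet, ofPred_forall]
  exact isClosed_iInter fun i => isClosed_biInter fun x _ => isClosed_le continuous_const
    (continuous_const.mul (((eval_continuous x).comp continuous_fst).add continuous_snd))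

theorem zero_mem_svmFeasibleSet {s : ℝ} (h : ∀ i, (K i).Nonempty → y i * s = 1) :
    ((0, s) : WeakDual ℝ X × ℝ) ∈ svmFeasibleSet K y := fun i x hx => by
  change 1 ≤ y i * (0 + s)
  rw [zero_add, h i ⟨x, hx⟩]

theorem abs_snd_le_of_mem_svmFeasibleSet {ip iq : ι} {xp xq : X} (hyp : y ip = 1)
    (hyq : y iq = -1) (hxp : xp ∈ K ip) (hxq : xq ∈ K iq) {p : WeakDual ℝ X × ℝ}
    (hp : p ∈ svmFeasibleSet K y) : |p.2| ≤ ‖toStrongDual p.1‖ * (‖xp‖ + ‖xq‖) := by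
  have hpos : 1 ≤ toStrongDual p.1 xp + p.2 := by simpa [hyp] using hp ip xp hxp
  have hneg : 1 ≤ -(toStrongDual p.1 xq + p.2) := by simpa [hyq] using hp iq xq hxq
  have hwp := abs_le.1 ((Real.norm_eq_abs _).symm.trans_le ((toStrongDual p.1).le_opNorm xp))
  have hwq := abs_le.1 ((Real.norm_eq_abs _).symm.trans_le ((toStrongDual p.1).le_opNorm xq))
  have : 0 ≤ ‖toStrongDual p.1‖ * ‖xp‖ := by positivity
  have : 0 ≤ ‖toStrongDual p.1‖ * ‖xq‖ := by positivity
  rw [abs_le, mul_add]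
  constructor <;> linarith

theorem isCompact_svmFeasibleSet_inter_normLE {ip iq : ι} {xp xq : X} (hyp : y ip = 1)
    (hyq : y iq = -1) (hxp : xp ∈ K ip) (hxq : xq ∈ K iq) (r : ℝ) :
    IsCompact (svmFeasibleSet K y ∩ {p | ‖toStrongDual p.1‖ ≤ r}) := by
  have hclosed : IsClosed {p : WeakDual ℝ X × ℝ | ‖toStrongDual p.1‖ ≤ r} :=
    (lowerSemicontinuous_norm.comp continuous_fst).isClosed_preimage r
  set C := r * (‖xp‖ + ‖xq‖)
  have hbox : IsCompact ((toStrongDual ⁻¹' closedBall (0 : StrongDual ℝ X) r) ×ˢ Icc (-C) C) :=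
    (WeakDual.isCompact_closedBall 0 r).prod isCompact_Icc
  refine hbox.of_isClosed_subset (isClosed_svmFeasibleSet.inter hclosed) ?_
  rintro p ⟨hp, hpr : ‖toStrongDual p.1‖ ≤ r⟩
  have hb := abs_snd_le_of_mem_svmFeasibleSet hyp hyq hxp hxq hp
  have : ‖toStrongDual p.1‖ * (‖xp‖ + ‖xq‖) ≤ C := mul_le_mul_of_nonneg_right hpr (by positivity)
  exact ⟨mem_closedBall_zero_iff.2 hpr, abs_le.1 (hb.trans this)⟩

theorem exists_isMinOn_norm_svmFeasibleSet (hy : ∀ i, y i = 1 ∨ y i = -1)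
    (hne : (svmFeasibleSet K y).Nonempty) :
    ∃ p ∈ svmFeasibleSet K y, IsMinOn (fun p => ‖toStrongDual p.1‖) (svmFeasibleSet K y) p := by
  by_cases hpos : ∃ i, y i = 1 ∧ (K i).Nonempty
  · by_cases hneg : ∃ i, y i = -1 ∧ (K i).Nonempty
    · obtain ⟨ip, hyp, xp, hxp⟩ := hpos
      obtain ⟨iq, hyq, xq, hxq⟩ := hneg
      obtain ⟨p₀, hp₀⟩ := hne
      exact exists_isMinOn_of_isCompact_inter_sublevel
        (lowerSemicontinuous_norm.comp continuous_fst) hp₀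
        (isCompact_svmFeasibleSet_inter_normLE hyp hyq hxp hxq _)
    · refine ⟨(0, 1), zero_mem_svmFeasibleSet fun i hi => ?_, fun q _ => by simp⟩
      rw [(hy i).resolve_right fun h => hneg ⟨i, h, hi⟩, one_mul]
  · refine ⟨(0, -1), zero_mem_svmFeasibleSet fun i hi => ?_, fun q _ => by simp⟩
    rw [(hy i).resolve_left fun h => hpos ⟨i, h, hi⟩]
    norm_num

theorem svmFeasibleSet_nonempty [Finite ι] (hKconv : ∀ i, Convex ℝ (K i))
    (hKcomp : ∀ i, IsCompact (toWeakSpace ℝ X '' K i)) (hy : ∀ i, y i = 1 ∨ y i = -1)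
    (hdisj : convexHull ℝ (⋃ i ∈ {i | y i = 1}, K i) ∩
      convexHull ℝ (⋃ i ∈ {i | y i = -1}, K i) = ∅) :
    (svmFeasibleSet K y).Nonempty := by
  -- instance search does not unfold `WeakSpace` to the `WeakBilin` carrying this instance
  have : LocallyConvexSpace ℝ (WeakSpace ℝ X) := WeakBilin.locallyConvexSpace
  let hull (c : ℝ) : Set (WeakSpace ℝ X) :=
    convexHull ℝ (⋃ i ∈ {i | y i = c}, toWeakSpace ℝ X '' K i)
  have hull_eq (c : ℝ) : hull c = toWeakSpace ℝ X '' convexHull ℝ (⋃ i ∈ {i | y i = c}, K i) := by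
    have := (toWeakSpace ℝ X).toLinearMap.image_convexHull (⋃ i ∈ {i | y i = c}, K i)
    rw [image_iUnion₂] at this
    exact this.symm
  have hull_compact (c : ℝ) : IsCompact (hull c) :=
    (toFinite _).isCompact_convexHull_biUnion hKcomp fun i => (hKconv i).linear_image _
  have hdisj' : Disjoint (hull (-1)) (hull 1) := by
    rw [hull_eq, hull_eq, disjoint_image_iff (toWeakSpace ℝ X).injective, disjoint_comm,
      disjoint_iff_inter_eq_empty]
    exact hdisj
  obtain ⟨f, b, hneg, hpos⟩ := exists_affine_separation (convex_convexHull ℝ _) (hull_compact (-1))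
    (convex_convexHull ℝ _) (hull_compact 1).isClosed hdisj'
  refine ⟨(StrongDual.toWeakDual (f.comp (toWeakSpaceCLM ℝ X)), b), fun i x hx => ?_⟩
  have hx' (c : ℝ) (hc : y i = c) : toWeakSpace ℝ X x ∈ hull c :=
    subset_convexHull ℝ _ (mem_biUnion hc (mem_image_of_mem _ hx))
  rcases hy i with hi | hi
  · simpa [hi] using hpos _ (hx' 1 hi)
  · simpa [hi] using le_neg.1 (hneg _ (hx' (-1) hi))

end RobustSVM

theorem robust_svm_exists_solution_general
    {X : Type*} [NormedAddCommGroup X] [NormedSpace ℝ X]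
    {m : ℕ} (K : Fin m → Set X)
    (hKconv : ∀ i, Convex ℝ (K i))
    (hKcomp : ∀ i, IsCompact (toWeakSpace ℝ X '' K i))
    (y : Fin m → ℝ) (hy : ∀ i, y i = 1 ∨ y i = -1)
    (hdisj : convexHull ℝ (⋃ i ∈ {i | y i = 1}, K i) ∩
             convexHull ℝ (⋃ i ∈ {i | y i = -1}, K i) = ∅) :
    ∃ (w : X →L[ℝ] ℝ) (b : ℝ),
      (∀ i, ∀ x ∈ K i, 1 ≤ y i * (w x + b)) ∧
      (∀ (w' : X →L[ℝ] ℝ) (b' : ℝ),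
        (∀ i, ∀ x ∈ K i, 1 ≤ y i * (w' x + b')) →
        (1 / 2 : ℝ) * ‖w‖ ^ 2 ≤ (1 / 2 : ℝ) * ‖w'‖ ^ 2) := by
  obtain ⟨p, hp, hmin⟩ := exists_isMinOn_norm_svmFeasibleSet hy
    (svmFeasibleSet_nonempty hKconv hKcomp hy hdisj)
  refine ⟨WeakDual.toStrongDual p.1, p.2, hp, fun w' b' h' => ?_⟩
  have hle : ‖WeakDual.toStrongDual p.1‖ ≤ ‖w'‖ := hmin (a := (StrongDual.toWeakDual w', b')) h'
  gcongr

theorem robust_svm_exists_solution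
    {X : Type*} [NormedAddCommGroup X] [NormedSpace ℝ X] [CompleteSpace X]
    {m : ℕ} (K : Fin m → Set X)
    (hKconv : ∀ i, Convex ℝ (K i)) (hKne : ∀ i, (K i).Nonempty)
    (hKcomp : ∀ i, IsCompact (toWeakSpace ℝ X '' K i))
    (y : Fin m → ℝ) (hy : ∀ i, y i = 1 ∨ y i = -1)
    (hdisj : convexHull ℝ (⋃ i ∈ {i | y i = 1}, K i) ∩
             convexHull ℝ (⋃ i ∈ {i | y i = -1}, K i) = ∅) :
    ∃ (w : X →L[ℝ] ℝ) (b : ℝ),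
      (∀ i, ∀ x ∈ K i, 1 ≤ y i * (w x + b)) ∧
      (∀ (w' : X →L[ℝ] ℝ) (b' : ℝ),
        (∀ i, ∀ x ∈ K i, 1 ≤ y i * (w' x + b')) →
        (1 / 2 : ℝ) * ‖w‖ ^ 2 ≤ (1 / 2 : ℝ) * ‖w'‖ ^ 2) :=
  robust_svm_exists_solution_general K hKconv hKcomp y hy hdisj
end

section
/- Under the hypotheses of the robust SVM existence theorem, if moreover X* is strictly convex, then the w-component of the optimal solution of the robust SVM problem is unique. -/
/-!
Two minimizers have the same norm, and by convexity of the constraints their midpoint (with the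
averaged bias) is again feasible. In a strictly convex space the midpoint of two distinct vectors
of equal norm is strictly shorter, contradicting minimality.
-/

theorem StrictConvexSpace.of_norm_combo_unit_lt_one {E : Type*} [NormedAddCommGroup E]
    [NormedSpace ℝ E]
    (h : ∀ x y : E, x ≠ y → ‖x‖ = 1 → ‖y‖ = 1 → ∀ t ∈ Set.Ioo (0 : ℝ) 1, ‖t • x + (1 - t) • y‖ < 1) :
    StrictConvexSpace ℝ E :=
  .of_norm_combo_lt_one fun x y hx hy hxy =>
    ⟨1 / 2, 1 - 1 / 2, add_sub_cancel _ _, h x y hxy hx hy _ ⟨by norm_num, by norm_num⟩⟩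

section RobustSVM

variable {ι X : Type*} [NormedAddCommGroup X] [NormedSpace ℝ X] {K : ι → Set X} {y : ι → ℝ}

def RobustSVMFeasible (K : ι → Set X) (y : ι → ℝ) (w : X →L[ℝ] ℝ) (b : ℝ) : Prop :=
  ∀ i, ∀ x ∈ K i, 1 ≤ y i * (w x + b)

theorem RobustSVMFeasible.combo {w₁ w₂ : X →L[ℝ] ℝ} {b₁ b₂ s t : ℝ}
    (h₁ : RobustSVMFeasible K y w₁ b₁) (h₂ : RobustSVMFeasible K y w₂ b₂)
    (hs : 0 ≤ s) (ht : 0 ≤ t) (hst : s + t = 1) :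
    RobustSVMFeasible K y (s • w₁ + t • w₂) (s * b₁ + t * b₂) := by
  intro i x hx
  have key : y i * ((s • w₁ + t • w₂) x + (s * b₁ + t * b₂))
      = s * (y i * (w₁ x + b₁)) + t * (y i * (w₂ x + b₂)) := by
    simp only [add_apply, smul_apply, smul_eq_mul]
    ring
  rw [key]
  nlinarith [h₁ i x hx, h₂ i x hx]

theorem norm_le_of_robustSVM_minimizer {w₀ w : X →L[ℝ] ℝ} {b : ℝ}
    (hmin : ∀ (w : X →L[ℝ] ℝ) (b : ℝ),
      RobustSVMFeasible K y w b → (1 / 2 : ℝ) * ‖w₀‖ ^ 2 ≤ (1 / 2 : ℝ) * ‖w‖ ^ 2)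
    (h : RobustSVMFeasible K y w b) : ‖w₀‖ ≤ ‖w‖ :=
  (pow_le_pow_iff_left₀ (norm_nonneg _) (norm_nonneg _) two_ne_zero).1 (by linarith [hmin w b h])

end RobustSVM

theorem robust_svm_w_unique_of_strictly_convex_dual_general
    {X : Type*} [NormedAddCommGroup X] [NormedSpace ℝ X]
    {m : ℕ} (K : Fin m → Set X)
    (y : Fin m → ℝ)
    (hSC : ∀ w₁ w₂ : X →L[ℝ] ℝ, w₁ ≠ w₂ → ‖w₁‖ = 1 → ‖w₂‖ = 1 →
      ∀ t ∈ Set.Ioo (0 : ℝ) 1, ‖t • w₁ + (1 - t) • w₂‖ < 1)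
    (w₁ w₂ : X →L[ℝ] ℝ) (b₁ b₂ : ℝ)
    (hfeas₁ : ∀ i, ∀ x ∈ K i, 1 ≤ y i * (w₁ x + b₁))
    (hfeas₂ : ∀ i, ∀ x ∈ K i, 1 ≤ y i * (w₂ x + b₂))
    (hmin₁ : ∀ (w : X →L[ℝ] ℝ) (b : ℝ),
      (∀ i, ∀ x ∈ K i, 1 ≤ y i * (w x + b)) →
      (1 / 2 : ℝ) * ‖w₁‖ ^ 2 ≤ (1 / 2 : ℝ) * ‖w‖ ^ 2)
    (hmin₂ : ∀ (w : X →L[ℝ] ℝ) (b : ℝ),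
      (∀ i, ∀ x ∈ K i, 1 ≤ y i * (w x + b)) →
      (1 / 2 : ℝ) * ‖w₂‖ ^ 2 ≤ (1 / 2 : ℝ) * ‖w‖ ^ 2) :
    w₁ = w₂ := by
  have := StrictConvexSpace.of_norm_combo_unit_lt_one hSC
  by_contra hne
  have hnorm : ‖w₁‖ = ‖w₂‖ :=
    le_antisymm (norm_le_of_robustSVM_minimizer hmin₁ hfeas₂)
      (norm_le_of_robustSVM_minimizer hmin₂ hfeas₁)
  have hmid_feas : RobustSVMFeasible K y ((1 / 2 : ℝ) • w₁ + (1 / 2 : ℝ) • w₂)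
      ((1 / 2 : ℝ) * b₁ + (1 / 2 : ℝ) * b₂) :=
    RobustSVMFeasible.combo hfeas₁ hfeas₂ (by norm_num) (by norm_num) (by norm_num)
  have hmid_lt : ‖(1 / 2 : ℝ) • (w₁ + w₂)‖ < ‖w₁‖ := (norm_midpoint_lt_iff hnorm).2 hne
  rw [smul_add] at hmid_lt
  exact hmid_lt.not_ge (norm_le_of_robustSVM_minimizer hmin₁ hmid_feas)

theorem robust_svm_w_unique_of_strictly_convex_dual
    {X : Type*} [NormedAddCommGroup X] [NormedSpace ℝ X] [CompleteSpace X]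
    {m : ℕ} (K : Fin m → Set X)
    (hKconv : ∀ i, Convex ℝ (K i)) (hKne : ∀ i, (K i).Nonempty)
    (hKcomp : ∀ i, IsCompact (toWeakSpace ℝ X '' K i))
    (y : Fin m → ℝ) (hy : ∀ i, y i = 1 ∨ y i = -1)
    (hdisj : convexHull ℝ (⋃ i ∈ {i | y i = 1}, K i) ∩
             convexHull ℝ (⋃ i ∈ {i | y i = -1}, K i) = ∅)
    (hSC : ∀ w₁ w₂ : X →L[ℝ] ℝ, w₁ ≠ w₂ → ‖w₁‖ = 1 → ‖w₂‖ = 1 →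
      ∀ t ∈ Set.Ioo (0 : ℝ) 1, ‖t • w₁ + (1 - t) • w₂‖ < 1)
    (w₁ w₂ : X →L[ℝ] ℝ) (b₁ b₂ : ℝ)
    (hfeas₁ : ∀ i, ∀ x ∈ K i, 1 ≤ y i * (w₁ x + b₁))
    (hfeas₂ : ∀ i, ∀ x ∈ K i, 1 ≤ y i * (w₂ x + b₂))
    (hmin₁ : ∀ (w : X →L[ℝ] ℝ) (b : ℝ),
      (∀ i, ∀ x ∈ K i, 1 ≤ y i * (w x + b)) →
      (1 / 2 : ℝ) * ‖w₁‖ ^ 2 ≤ (1 / 2 : ℝ) * ‖w‖ ^ 2)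
    (hmin₂ : ∀ (w : X →L[ℝ] ℝ) (b : ℝ),
      (∀ i, ∀ x ∈ K i, 1 ≤ y i * (w x + b)) →
      (1 / 2 : ℝ) * ‖w₂‖ ^ 2 ≤ (1 / 2 : ℝ) * ‖w‖ ^ 2) :
    w₁ = w₂ :=
  robust_svm_w_unique_of_strictly_convex_dual_general K y hSC w₁ w₂ b₁ b₂ hfeas₁ hfeas₂ hmin₁ hmin₂
end

section
/- Let ℬ, 𝒞 be real Banach spaces, Uᵢ ⊆ 𝒞 a weakly compact convex set, and gᵢ : ℬ × 𝒞 → ℝ with gᵢ(x, ·) linear and continuous in the second variable and gᵢ(·, u) convex continuous. Define Gᵢ(x) = sup_{u∈Uᵢ} gᵢ(x, u) and Uᵢ(x) = argmax_{u∈Uᵢ} gᵢ(x, u). Then the set ⋃_{u ∈ Uᵢ(x)} ∂ₓ gᵢ(x, u) is convex, and ∂Gᵢ(x) = ⋃_{u ∈ Uᵢ(x)} ∂ₓ gᵢ(x, u). -/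
/-!
Since `g x` is linear, the maximizers of `g x` on `U` form a convex set, and the subgradient
inequality for `g · u` is affine in `u`; hence the union of the subdifferentials is convex. It is
also weak*-closed: it is the projection, along the weakly compact factor, of a set that is closed
for the product of the weak and weak* topologies. The assumed Danskin formula, a weak*-closed
convex hull of this union, therefore returns the union itself.
-/

/-- The Fenchel subdifferential of `h : B → ℝ` at `x`. -/
def fenchelSubdiff {B : Type*} [NormedAddCommGroup B] [NormedSpace ℝ B]
    (h : B → ℝ) (x : B) : Set (B →L[ℝ] ℝ) :=
  {φ : B →L[ℝ] ℝ | ∀ y : B, h x + φ (y - x) ≤ h y}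

open Set

theorem IsCompact.isClosed_biUnion_of_isClosed_graph {X Y : Type*} [TopologicalSpace X]
    [TopologicalSpace Y] {K : Set X} (hK : IsCompact K) {s : X → Set Y}
    (hs : IsClosed {p : X × Y | p.2 ∈ s p.1}) : IsClosed (⋃ x ∈ K, s x) := by
  have : CompactSpace K := isCompact_iff_compactSpace.mp hK
  have hgraph : IsClosed {p : K × Y | p.2 ∈ s p.1} :=
    hs.preimage (continuous_subtype_val.prodMap continuous_id)
  convert isClosedMap_snd_of_compactSpace _ hgraph using 1
  ext y
  simp

theorem continuous_apply_toWeakSpace_symm {𝕜 E : Type*} [CommSemiring 𝕜] [TopologicalSpace 𝕜]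
    [ContinuousAdd 𝕜] [ContinuousConstSMul 𝕜 𝕜] [AddCommMonoid E] [Module 𝕜 E]
    [TopologicalSpace E] (f : StrongDual 𝕜 E) :
    Continuous fun w : WeakSpace 𝕜 E => f ((toWeakSpace 𝕜 E).symm w) :=
  WeakBilin.eval_continuous (topDualPairing 𝕜 E).flip f

section

variable {B : Type*} [NormedAddCommGroup B] [NormedSpace ℝ B]

theorem smul_add_smul_mem_fenchelSubdiff {h₁ h₂ : B → ℝ} {x : B} {φ₁ φ₂ : B →L[ℝ] ℝ}
    (hφ₁ : φ₁ ∈ fenchelSubdiff h₁ x) (hφ₂ : φ₂ ∈ fenchelSubdiff h₂ x) {a b : ℝ}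
    (ha : 0 ≤ a) (hb : 0 ≤ b) : a • φ₁ + b • φ₂ ∈ fenchelSubdiff (a • h₁ + b • h₂) x := by
  intro y
  have h₁y := mul_le_mul_of_nonneg_left (hφ₁ y) ha
  have h₂y := mul_le_mul_of_nonneg_left (hφ₂ y) hb
  simp only [Pi.add_apply, Pi.smul_apply, _root_.add_apply, _root_.smul_apply, smul_eq_mul]
  linarith

variable {C : Type*} [NormedAddCommGroup C] [NormedSpace ℝ C] (g : B → C →L[ℝ] ℝ) (x : B)

theorem convex_biUnion_fenchelSubdiff {A : Set C} (hA : Convex ℝ A) :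
    Convex ℝ (⋃ u ∈ A, fenchelSubdiff (fun z => g z u) x) := by
  intro φ₁ hφ₁ φ₂ hφ₂ a b ha hb hab
  simp only [mem_iUnion₂] at hφ₁ hφ₂ ⊢
  obtain ⟨u₁, hu₁, hφ₁⟩ := hφ₁
  obtain ⟨u₂, hu₂, hφ₂⟩ := hφ₂
  refine ⟨a • u₁ + b • u₂, hA hu₁ hu₂ ha hb hab, ?_⟩
  convert smul_add_smul_mem_fenchelSubdiff hφ₁ hφ₂ ha hb using 2
  ext z
  simp

theorem isClosed_toWeakDual_image_biUnion_fenchelSubdiff {U : Set C}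
    (hU : IsCompact (toWeakSpace ℝ C '' U)) (c : ℝ) :
    IsClosed (StrongDual.toWeakDual ''
      ⋃ u ∈ {u ∈ U | g x u = c}, fenchelSubdiff (fun z => g z u) x) := by
  let s : WeakSpace ℝ C → Set (WeakDual ℝ B) := fun w =>
    {φ | g x ((toWeakSpace ℝ C).symm w) = c ∧
      ∀ y, g x ((toWeakSpace ℝ C).symm w) + φ (y - x) ≤ g y ((toWeakSpace ℝ C).symm w)}
  have hgraph : IsClosed {p : WeakSpace ℝ C × WeakDual ℝ B | p.2 ∈ s p.1} := by
    have hcont (y : B) : Continuous fun p : WeakSpace ℝ C × WeakDual ℝ B =>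
        g y ((toWeakSpace ℝ C).symm p.1) :=
      (continuous_apply_toWeakSpace_symm (g y)).comp continuous_fst
    refine (isClosed_eq (hcont x) continuous_const).inter ?_
    show IsClosed {p : WeakSpace ℝ C × WeakDual ℝ B | ∀ y : B, _}
    rw [ofPred_forall]
    exact isClosed_iInter fun y => isClosed_le
      ((hcont x).add ((WeakDual.eval_continuous (y - x)).comp continuous_snd)) (hcont y)
  convert hU.isClosed_biUnion_of_isClosed_graph hgraph using 1
  ext ψ
  obtain ⟨φ, rfl⟩ := StrongDual.toWeakDual.surjective ψ
  simp [s, fenchelSubdiff, StrongDual.toWeakDual.injective.mem_set_image, and_assoc, and_left_comm]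

end

theorem danskin_subdifferential_of_sup_general
    {B C : Type*} [NormedAddCommGroup B] [NormedSpace ℝ B]
    [NormedAddCommGroup C] [NormedSpace ℝ C]
    (U : Set C) (hUconv : Convex ℝ U)
    (hUcomp : IsCompact (toWeakSpace ℝ C '' U))
    (g : B → C →L[ℝ] ℝ)
    (x : B)
    -- the Danskin-type formula: `∂G(x)` is the weak*-closed convex hull of the union
    (hDanskin :
      (StrongDual.toWeakDual ''
          fenchelSubdiff (fun z => sSup ((fun u => g z u) '' U)) x)
        = closure (StrongDual.toWeakDual '' (convexHull ℝ
            (⋃ u ∈ {u ∈ U | g x u = sSup ((fun v => g x v) '' U)},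
              fenchelSubdiff (fun z => g z u) x)))) :
    Convex ℝ (⋃ u ∈ {u ∈ U | g x u = sSup ((fun v => g x v) '' U)},
        fenchelSubdiff (fun z => g z u) x) ∧
    fenchelSubdiff (fun z => sSup ((fun u => g z u) '' U)) x
      = ⋃ u ∈ {u ∈ U | g x u = sSup ((fun v => g x v) '' U)},
          fenchelSubdiff (fun z => g z u) x := by
  set M := sSup ((fun v => g x v) '' U)
  have hconv : Convex ℝ (⋃ u ∈ {u ∈ U | g x u = M}, fenchelSubdiff (fun z => g z u) x) :=
    convex_biUnion_fenchelSubdiff g x (hUconv.inter (convex_hyperplane (g x).isLinear M))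
  refine ⟨hconv, StrongDual.toWeakDual.injective.image_injective ?_⟩
  rw [hDanskin, hconv.convexHull_eq,
    (isClosed_toWeakDual_image_biUnion_fenchelSubdiff g x hUcomp M).closure_eq]

theorem danskin_subdifferential_of_sup
    {B C : Type*} [NormedAddCommGroup B] [NormedSpace ℝ B]
    [NormedAddCommGroup C] [NormedSpace ℝ C]
    [CompleteSpace B] [CompleteSpace C]
    (U : Set C) (hUne : U.Nonempty) (hUconv : Convex ℝ U)
    (hUcomp : IsCompact (toWeakSpace ℝ C '' U))
    (g : B → C →L[ℝ] ℝ)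
    (hgconv : ∀ u ∈ U, ConvexOn ℝ Set.univ (fun x => g x u))
    (hgcont : ∀ u ∈ U, Continuous (fun x => g x u))
    (x : B)
    -- the Danskin-type formula: `∂G(x)` is the weak*-closed convex hull of the union
    (hDanskin :
      (StrongDual.toWeakDual ''
          fenchelSubdiff (fun z => sSup ((fun u => g z u) '' U)) x)
        = closure (StrongDual.toWeakDual '' (convexHull ℝ
            (⋃ u ∈ {u ∈ U | g x u = sSup ((fun v => g x v) '' U)},
              fenchelSubdiff (fun z => g z u) x)))) :
    Convex ℝ (⋃ u ∈ {u ∈ U | g x u = sSup ((fun v => g x v) '' U)},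
        fenchelSubdiff (fun z => g z u) x) ∧
    fenchelSubdiff (fun z => sSup ((fun u => g z u) '' U)) x
      = ⋃ u ∈ {u ∈ U | g x u = sSup ((fun v => g x v) '' U)},
          fenchelSubdiff (fun z => g z u) x :=
  danskin_subdifferential_of_sup_general U hUconv hUcomp g x hDanskin
end

section
/- Let X be a real Banach space, xᵢ ∈ X and yᵢ ∈ {−1,+1} for i = 1,…,m, and consider the Lagrangian L₁(w, b; λ) = ½‖w‖² + Σᵢ λᵢ(1 − yᵢ(w(xᵢ) + b)) on X* × ℝ for fixed λ ∈ ℝ₊^m. If (w̄, b̄) minimizes L₁(·, ·; λ) over X* × ℝ, then Σᵢ λᵢ yᵢ = 0 and Σᵢ λᵢ yᵢ xᵢ belongs to the normalized duality mapping M(w̄) ⊆ X** evaluated via the canonical embedding, i.e. (Σᵢ λᵢ yᵢ xᵢ)(w̄) viewed as w̄(Σᵢ λᵢ yᵢ xᵢ) satisfies w̄(Σᵢ λᵢ yᵢ xᵢ) = ‖w̄‖² = ‖Σᵢ λᵢ yᵢ xᵢ‖². -/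
/-!
Minimising the Lagrangian in `b` kills the coefficient `∑ λᵢ yᵢ` of the affine term, after which
`w̄` minimises `½‖w‖² - φ w` over `X*`, where `φ` is the canonical image of `v = ∑ λᵢ yᵢ xᵢ` in
`X**`. Testing this minimality along the lines `t ↦ t • w̄` and `t ↦ t • u` gives quadratics in `t`
that stay nonnegative, and their discriminants yield `φ w̄ = ‖w̄‖²` and `|φ u| ≤ ‖w̄‖ ‖u‖`, so
`φ` lies in the duality mapping of `w̄`; finally `‖φ‖ = ‖v‖` because `X → X**` is an isometry.
-/

open NormedSpace

lemma eq_zero_of_forall_mul_le {s c : ℝ} (h : ∀ b : ℝ, b * s ≤ c) : s = 0 := by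
  by_contra hs
  have := h ((c + 1) / s)
  rw [div_mul_cancel₀ _ hs] at this
  linarith

section DualityMap

variable {E : Type*} [SeminormedAddCommGroup E] [NormedSpace ℝ E] {φ : E →L[ℝ] ℝ} {f : E}

lemma apply_eq_norm_sq_of_forall_le
    (h : ∀ w : E, (1 / 2 : ℝ) * ‖f‖ ^ 2 - φ f ≤ (1 / 2 : ℝ) * ‖w‖ ^ 2 - φ w) :
    φ f = ‖f‖ ^ 2 := by
  have hquad : ∀ t : ℝ,
      0 ≤ (1 / 2 * ‖f‖ ^ 2) * (t * t) + -φ f * t + (φ f - 1 / 2 * ‖f‖ ^ 2) := by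
    intro t
    have := h (t • f)
    rw [norm_smul, map_smul, smul_eq_mul, Real.norm_eq_abs, mul_pow, sq_abs] at this
    linarith
  have := discrim_le_zero hquad
  rw [discrim] at this
  nlinarith [sq_nonneg (φ f - ‖f‖ ^ 2)]

lemma norm_eq_of_forall_le
    (h : ∀ w : E, (1 / 2 : ℝ) * ‖f‖ ^ 2 - φ f ≤ (1 / 2 : ℝ) * ‖w‖ ^ 2 - φ w) :
    ‖φ‖ = ‖f‖ := by
  have happ := apply_eq_norm_sq_of_forall_le h
  refine le_antisymm (φ.opNorm_le_bound (norm_nonneg f) fun u => ?_) ?_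
  · have hquad : ∀ t : ℝ, 0 ≤ (1 / 2 * ‖u‖ ^ 2) * (t * t) + -φ u * t + 1 / 2 * ‖f‖ ^ 2 := by
      intro t
      have := h (t • u)
      rw [norm_smul, map_smul, smul_eq_mul, Real.norm_eq_abs, mul_pow, sq_abs] at this
      linarith
    have := discrim_le_zero hquad
    rw [discrim] at this
    rw [Real.norm_eq_abs]
    exact abs_le_of_sq_le_sq (by nlinarith) (by positivity)
  · have : ‖f‖ ^ 2 ≤ ‖φ‖ * ‖f‖ := happ ▸ (le_abs_self _).trans (φ.le_opNorm f)
    nlinarith [norm_nonneg φ, norm_nonneg f]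

end DualityMap

lemma sum_lagrangian_term_eq {X : Type*} [AddCommGroup X] [Module ℝ X] [TopologicalSpace X]
    {m : ℕ} (x : Fin m → X) (y lam : Fin m → ℝ) (w : X →L[ℝ] ℝ) (b : ℝ) :
    ∑ i, lam i * (1 - y i * (w (x i) + b)) =
      ∑ i, lam i - w (∑ i, (lam i * y i) • x i) - b * ∑ i, lam i * y i := by
  simp only [map_sum, map_smul, smul_eq_mul, Finset.mul_sum, ← Finset.sum_sub_distrib]
  exact Finset.sum_congr rfl fun i _ => by ring

theorem lagrangian_minimizer_duality_map_condition_general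
    {X : Type*} [NormedAddCommGroup X] [NormedSpace ℝ X]
    {m : ℕ}
    (x : Fin m → X) (y : Fin m → ℝ)
    (lam : Fin m → ℝ)
    (wb : X →L[ℝ] ℝ) (bb : ℝ)
    (hmin : ∀ (w : X →L[ℝ] ℝ) (b : ℝ),
      (1 / 2 : ℝ) * ‖wb‖ ^ 2 + ∑ i, lam i * (1 - y i * (wb (x i) + bb)) ≤
      (1 / 2 : ℝ) * ‖w‖ ^ 2 + ∑ i, lam i * (1 - y i * (w (x i) + b))) :
    (∑ i, lam i * y i) = 0 ∧
    wb (∑ i, (lam i * y i) • x i) = ‖wb‖ ^ 2 ∧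
    ‖wb‖ ^ 2 = ‖∑ i, (lam i * y i) • x i‖ ^ 2 := by
  set v := ∑ i, (lam i * y i) • x i
  have hs : ∑ i, lam i * y i = 0 := eq_zero_of_forall_mul_le (c := bb * ∑ i, lam i * y i)
    fun b => by
      have := hmin wb b
      rw [sum_lagrangian_term_eq, sum_lagrangian_term_eq] at this
      linarith
  have hφ : ∀ w : X →L[ℝ] ℝ, (1 / 2 : ℝ) * ‖wb‖ ^ 2 - inclusionInDoubleDual ℝ X v wb ≤
      (1 / 2 : ℝ) * ‖w‖ ^ 2 - inclusionInDoubleDual ℝ X v w := fun w => by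
    have := hmin w 0
    rw [sum_lagrangian_term_eq, sum_lagrangian_term_eq, hs] at this
    simp only [dual_def]
    linarith
  refine ⟨hs, apply_eq_norm_sq_of_forall_le hφ, ?_⟩
  rw [← norm_eq_of_forall_le hφ]
  exact congrArg (· ^ 2) ((inclusionInDoubleDualLi ℝ).norm_map v)

theorem lagrangian_minimizer_duality_map_condition
    {X : Type*} [NormedAddCommGroup X] [NormedSpace ℝ X]
    [CompleteSpace X] {m : ℕ}
    (x : Fin m → X) (y : Fin m → ℝ) (hy : ∀ i, y i = 1 ∨ y i = -1)
    (lam : Fin m → ℝ) (hlam : ∀ i, 0 ≤ lam i)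
    (wb : X →L[ℝ] ℝ) (bb : ℝ)
    (hmin : ∀ (w : X →L[ℝ] ℝ) (b : ℝ),
      (1 / 2 : ℝ) * ‖wb‖ ^ 2 + ∑ i, lam i * (1 - y i * (wb (x i) + bb)) ≤
      (1 / 2 : ℝ) * ‖w‖ ^ 2 + ∑ i, lam i * (1 - y i * (w (x i) + b))) :
    (∑ i, lam i * y i) = 0 ∧
    wb (∑ i, (lam i * y i) • x i) = ‖wb‖ ^ 2 ∧
    ‖wb‖ ^ 2 = ‖∑ i, (lam i * y i) • x i‖ ^ 2 :=
  lagrangian_minimizer_duality_map_condition_general x y lam wb bb hmin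
end
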